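/- arXiv:2101.04520 — 2 statements merged into one kernel-verified Lean document; each statement's English description precedes it below -/
import Mathlib

section
/- Let p : Fin k → ℝ be nonnegative with k ≥ 1, and let q ≥ 0. Define H² = (1/2)·∑_{j=1}^k (√(p_j) − √(q/k))² and H_d² = (1/2)·(√(∑_{j=1}^k p_j) − √q)². Then H² ≥ H_d². -/
/-!
Expanding both squares, the cross terms are compared through Cauchy–Schwarz,
`∑ j, √(p j) ≤ √(∑ j, p j) * √k`, and the uniform split recombines as `√k * √(q / k) = √q`.
-/

open Finset

theorem Real.sum_sqrt_le_sqrt_sum_mul_sqrt_card {ι : Type*} (s : Finset ι) {a : ι → ℝ}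
    (ha : ∀ i, 0 ≤ a i) : ∑ i ∈ s, √(a i) ≤ √(∑ i ∈ s, a i) * √(#s : ℝ) := by
  simpa using Real.sum_sqrt_mul_sqrt_le s ha fun _ ↦ zero_le_one

theorem Real.sq_sqrt_sum_sub_le_sum_sq_sqrt_sub {ι : Type*} (s : Finset ι) {a : ι → ℝ}
    (ha : ∀ i, 0 ≤ a i) {c : ℝ} (hc : 0 ≤ c) :
    (√(∑ i ∈ s, a i) - √(#s : ℝ) * c) ^ 2 ≤ ∑ i ∈ s, (√(a i) - c) ^ 2 := by
  have hsum : ∑ i ∈ s, (√(a i) - c) ^ 2 = ∑ i ∈ s, a i - 2 * c * ∑ i ∈ s, √(a i) + #s * c ^ 2 := by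
    simp only [sub_sq, Real.sq_sqrt (ha _), sum_add_distrib, sum_sub_distrib, ← sum_mul, ← mul_sum,
      sum_const, nsmul_eq_mul]
    ring
  have htot : (√(∑ i ∈ s, a i) - √(#s : ℝ) * c) ^ 2
      = ∑ i ∈ s, a i - 2 * c * (√(∑ i ∈ s, a i) * √(#s : ℝ)) + #s * c ^ 2 := by
    rw [sub_sq, mul_pow, Real.sq_sqrt (sum_nonneg fun i _ ↦ ha i), Real.sq_sqrt (Nat.cast_nonneg _)]
    ring
  rw [hsum, htot]
  have := mul_le_mul_of_nonneg_left (Real.sum_sqrt_le_sqrt_sum_mul_sqrt_card s ha) hc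
  linarith

theorem hellinger_ge_dist_error_general (k : ℕ) (hk : 1 ≤ k) (p : Fin k → ℝ)
    (hp : ∀ j, 0 ≤ p j) (q : ℝ) :
    (1 / 2) * ∑ j, (Real.sqrt (p j) - Real.sqrt (q / k)) ^ 2 ≥
      (1 / 2) * (Real.sqrt (∑ j, p j) - Real.sqrt q) ^ 2 := by
  have hk0 : (k : ℝ) ≠ 0 := Nat.cast_ne_zero.mpr (by omega)
  have hsplit : √(#(univ : Finset (Fin k)) : ℝ) * √(q / k) = √q := by
    rw [card_univ, Fintype.card_fin, ← Real.sqrt_mul (Nat.cast_nonneg k), mul_div_cancel₀ q hk0]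
  have hdist := Real.sq_sqrt_sum_sub_le_sum_sq_sqrt_sub univ hp (Real.sqrt_nonneg (q / k))
  rw [hsplit] at hdist
  exact mul_le_mul_of_nonneg_left hdist (by norm_num)

theorem hellinger_ge_dist_error (k : ℕ) (hk : 1 ≤ k) (p : Fin k → ℝ)
    (hp : ∀ j, 0 ≤ p j) (q : ℝ) (hq : 0 ≤ q) :
    (1 / 2) * ∑ j, (Real.sqrt (p j) - Real.sqrt (q / k)) ^ 2 ≥
      (1 / 2) * (Real.sqrt (∑ j, p j) - Real.sqrt q) ^ 2 :=
  hellinger_ge_dist_error_general k hk p hp q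
end

section
/- Let X be a finite type partitioned into fibers by f : X → X' (f surjective, X' finite). For probability vectors p on X and p' on X', define H²(p,p') = (1/2)·∑_{x'∈X'} ∑_{x : f(x)=x'} (√p(x) − √(p'(x')/|f⁻¹(x')|))² and H_d²(p,p') = (1/2)·∑_{x'∈X'} (√(∑_{x : f(x)=x'} p(x)) − √p'(x'))². Then H²(p,p') ≥ H_d²(p,p'). -/
/-! On the fiber over `x'`, the vectors `(√p x)ₓ` and the constant vector `√(p' x' / |fiber|)` have
Euclidean norms `√(∑ p x)` and `√(p' x')`, so each fiber's term is bounded by the reverse triangle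
inequality `(‖u‖ - ‖v‖)² ≤ ‖u - v‖²`, which follows from Cauchy–Schwarz. -/

open Finset Real

theorem sq_sqrt_sum_sq_sub_sqrt_sum_sq_le {ι : Type*} (s : Finset ι) (f g : ι → ℝ) :
    (√(∑ i ∈ s, f i ^ 2) - √(∑ i ∈ s, g i ^ 2)) ^ 2 ≤ ∑ i ∈ s, (f i - g i) ^ 2 := by
  have hf : √(∑ i ∈ s, f i ^ 2) ^ 2 = ∑ i ∈ s, f i ^ 2 := sq_sqrt (by positivity)
  have hg : √(∑ i ∈ s, g i ^ 2) ^ 2 = ∑ i ∈ s, g i ^ 2 := sq_sqrt (by positivity)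
  have expand : ∑ i ∈ s, (f i - g i) ^ 2
      = ∑ i ∈ s, f i ^ 2 - 2 * ∑ i ∈ s, f i * g i + ∑ i ∈ s, g i ^ 2 := by
    simp only [sub_sq, sum_add_distrib, sum_sub_distrib, mul_sum, mul_assoc]
  nlinarith [sum_mul_le_sqrt_mul_sqrt s f g]

theorem sq_sqrt_sum_sub_sqrt_le_sum_sq_sub_sqrt_div_card {ι : Type*} (F : Finset ι)
    (hF : F.Nonempty) (p : ι → ℝ) (q : ℝ) (hp : ∀ i ∈ F, 0 ≤ p i) :
    (√(∑ i ∈ F, p i) - √q) ^ 2 ≤ ∑ i ∈ F, (√(p i) - √(q / #F)) ^ 2 := by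
  have hcard : (#F : ℝ) ≠ 0 := by exact_mod_cast hF.card_ne_zero
  have hsum : ∑ i ∈ F, √(p i) ^ 2 = ∑ i ∈ F, p i :=
    sum_congr rfl fun i hi => sq_sqrt (hp i hi)
  have hconst : √(∑ _i ∈ F, √(q / #F) ^ 2) = √q := by
    rw [sum_const, nsmul_eq_mul, sqrt_mul (Nat.cast_nonneg _), sqrt_sq (sqrt_nonneg _),
      ← sqrt_mul (Nat.cast_nonneg _), mul_div_cancel₀ q hcard]
  simpa only [hsum, hconst] using
    sq_sqrt_sum_sq_sub_sqrt_sum_sq_le F (fun i => √(p i)) (fun _ => √(q / #F))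

theorem hellinger_regret_decomposition_general (X X' : Type*) [Fintype X] [Fintype X'] [DecidableEq X']
    (f : X → X') (hf : Function.Surjective f) (p : X → ℝ) (p' : X' → ℝ)
    (hp : ∀ x, 0 ≤ p x) :
    (1 / 2) * ∑ x', ∑ x ∈ Finset.univ.filter (fun x => f x = x'),
        (Real.sqrt (p x) -
          Real.sqrt (p' x' / (Finset.univ.filter fun x => f x = x').card)) ^ 2 ≥
    (1 / 2) * ∑ x', (Real.sqrt (∑ x ∈ Finset.univ.filter (fun x => f x = x'), p x) -
        Real.sqrt (p' x')) ^ 2 := by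
  refine mul_le_mul_of_nonneg_left (sum_le_sum fun x' _ => ?_) (by norm_num)
  obtain ⟨x, hx⟩ := hf x'
  exact sq_sqrt_sum_sub_sqrt_le_sum_sq_sub_sqrt_div_card _ ⟨x, by simpa using hx⟩ p (p' x')
    fun x _ => hp x

theorem hellinger_regret_decomposition (X X' : Type*) [Fintype X] [Fintype X'] [DecidableEq X']
    (f : X → X') (hf : Function.Surjective f) (p : X → ℝ) (p' : X' → ℝ)
    (hp : ∀ x, 0 ≤ p x) (hp' : ∀ x', 0 ≤ p' x')
    (hp1 : ∑ x, p x = 1) (hp'1 : ∑ x', p' x' = 1) :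
    (1 / 2) * ∑ x', ∑ x ∈ Finset.univ.filter (fun x => f x = x'),
        (Real.sqrt (p x) -
          Real.sqrt (p' x' / (Finset.univ.filter fun x => f x = x').card)) ^ 2 ≥
    (1 / 2) * ∑ x', (Real.sqrt (∑ x ∈ Finset.univ.filter (fun x => f x = x'), p x) -
        Real.sqrt (p' x')) ^ 2 :=
  hellinger_regret_decomposition_general X X' f hf p p' hp
end
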